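/- Let ρ be a positive semidefinite complex matrix indexed by (Fin 3 → Fin 2) with trace 1 (a three-qubit density matrix). Define z₂ = (⟨Z_A Z_B⟩ + ⟨Z_A Z_C⟩ + ⟨Z_B Z_C⟩)/3, where ⟨Z_A Z_B⟩ = Σ_x (−1)^{x(0)+x(1)} ρ(x,x), ⟨Z_A Z_C⟩ = Σ_x (−1)^{x(0)+x(2)} ρ(x,x), ⟨Z_B Z_C⟩ = Σ_x (−1)^{x(1)+x(2)} ρ(x,x) (these are real numbers since diagonal entries of ρ are real). Let |GHZ₃⟩ ∈ ℂ^(Fin 3 → Fin 2) be given by |GHZ₃⟩(x) = 1/√2 if x is constant and 0 otherwise. Then ⟨GHZ₃| ρ |GHZ₃⟩ ≤ (1 + 3·z₂)/4. -/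

import Mathlib

/-!
Write `v = ghz3 = (e₀ + e₁)/√2` and `w = (e₀ - e₁)/√2` for `e₀ = |000⟩`, `e₁ = |111⟩`. The
parallelogram law gives `⟨v|ρ|v⟩ + ⟨w|ρ|w⟩ = ρ₀₀ + ρ₁₁`, so positivity of `⟨w|ρ|w⟩` bounds the
fidelity by the population `ρ₀₀ + ρ₁₁` of the two constant strings. On the other hand
`Z_A Z_B + Z_A Z_C + Z_B Z_C + 1` is diagonal with entry `4` on constant strings and `0`
elsewhere, so with `tr ρ = 1` this population is exactly `(1 + 3 z₂)/4`.
-/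

open scoped BigOperators
open Matrix ComplexOrder

/-- The three-qubit GHZ state: amplitude `1/√2` on constant functions, `0` elsewhere. -/
noncomputable def ghz3 : (Fin 3 → Fin 2) → ℂ :=
  fun x => if ∀ i j : Fin 3, x i = x j then ((1 / Real.sqrt 2 : ℝ) : ℂ) else 0

section QuadraticForm

variable {n R : Type*} [Fintype n] [CommRing R] [StarRing R]

theorem star_add_dotProduct_mulVec_add_add_star_sub (A : Matrix n n R) (a b : n → R) :
    star (a + b) ⬝ᵥ A *ᵥ (a + b) + star (a - b) ⬝ᵥ A *ᵥ (a - b) =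
      2 * (star a ⬝ᵥ A *ᵥ a + star b ⬝ᵥ A *ᵥ b) := by
  simp only [star_add, star_sub, mulVec_add, mulVec_sub, add_dotProduct, sub_dotProduct,
    dotProduct_add, dotProduct_sub]
  ring

theorem Matrix.PosSemidef.star_add_dotProduct_mulVec_add_le [PartialOrder R]
    [IsOrderedAddMonoid R] {A : Matrix n n R} (hA : A.PosSemidef) (a b : n → R) :
    star (a + b) ⬝ᵥ A *ᵥ (a + b) ≤ 2 * (star a ⬝ᵥ A *ᵥ a + star b ⬝ᵥ A *ᵥ b) := by
  rw [← star_add_dotProduct_mulVec_add_add_star_sub]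
  exact le_add_of_nonneg_right (hA.dotProduct_mulVec_nonneg _)

theorem star_single_dotProduct_mulVec_single [DecidableEq n] (A : Matrix n n R) (i : n) (c : R) :
    star (Pi.single i c) ⬝ᵥ A *ᵥ Pi.single i c = star c * c * A i i := by
  simp only [Pi.star_single, mulVec_single, single_dotProduct]
  rw [Pi.smul_apply, op_smul_eq_mul, col_apply]
  ring

theorem Matrix.PosSemidef.star_single_add_single_dotProduct_mulVec_le [PartialOrder R]
    [IsOrderedAddMonoid R] [DecidableEq n] {A : Matrix n n R} (hA : A.PosSemidef) (i j : n)
    (c : R) :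
    star (Pi.single i c + Pi.single j c) ⬝ᵥ A *ᵥ (Pi.single i c + Pi.single j c) ≤
      2 * (star c * c) * (A i i + A j j) := by
  convert hA.star_add_dotProduct_mulVec_add_le (Pi.single i c) (Pi.single j c) using 1
  rw [star_single_dotProduct_mulVec_single, star_single_dotProduct_mulVec_single]
  ring

end QuadraticForm

theorem Fin.neg_one_pow_pair_sums_add_one_eq (a b c : Fin 2) :
    (-1 : ℝ) ^ ((a : ℕ) + b) + (-1) ^ ((a : ℕ) + c) + (-1) ^ ((b : ℕ) + c) + 1 =
      if a = b ∧ b = c then 4 else 0 := by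
  fin_cases a <;> fin_cases b <;> fin_cases c <;> norm_num

theorem forall_apply_eq_apply_iff (x : Fin 3 → Fin 2) :
    (∀ i j, x i = x j) ↔ x = 0 ∨ x = 1 := by
  revert x; decide

theorem apply_eq_apply_and_apply_eq_apply_iff (x : Fin 3 → Fin 2) :
    x 0 = x 1 ∧ x 1 = x 2 ↔ x = 0 ∨ x = 1 := by
  revert x; decide

theorem sum_zz_correlations_add_sum_eq (p : (Fin 3 → Fin 2) → ℝ) :
    (∑ x : Fin 3 → Fin 2, (-1 : ℝ) ^ ((x 0 : ℕ) + (x 1 : ℕ)) * p x) +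
        (∑ x : Fin 3 → Fin 2, (-1 : ℝ) ^ ((x 0 : ℕ) + (x 2 : ℕ)) * p x) +
        (∑ x : Fin 3 → Fin 2, (-1 : ℝ) ^ ((x 1 : ℕ) + (x 2 : ℕ)) * p x) + ∑ x, p x =
      4 * (p 0 + p 1) := by
  calc _ = ∑ x : Fin 3 → Fin 2, (if x = 0 ∨ x = 1 then 4 else 0) * p x := by
        simp only [← Finset.sum_add_distrib]
        refine Finset.sum_congr rfl fun x _ => ?_
        have hsign := Fin.neg_one_pow_pair_sums_add_one_eq (x 0) (x 1) (x 2)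
        simp only [apply_eq_apply_and_apply_eq_apply_iff] at hsign
        rw [← hsign]
        ring
    _ = 4 * (p 0 + p 1) := by
        rw [Fintype.sum_eq_add 0 1 (by decide) fun x hx => by simp [hx.1, hx.2]]
        simp only [true_or, or_true, if_true]
        ring

theorem star_mul_self_ofReal_one_div_sqrt_two :
    star ((1 / Real.sqrt 2 : ℝ) : ℂ) * ((1 / Real.sqrt 2 : ℝ) : ℂ) = 1 / 2 := by
  rw [Complex.star_def, Complex.conj_ofReal, ← Complex.ofReal_mul, div_mul_div_comm, one_mul,
    Real.mul_self_sqrt zero_le_two]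
  norm_num

theorem ghz3_eq_single_add_single :
    ghz3 = Pi.single (0 : Fin 3 → Fin 2) ((1 / Real.sqrt 2 : ℝ) : ℂ) +
      Pi.single 1 ((1 / Real.sqrt 2 : ℝ) : ℂ) := by
  have h01 : (0 : Fin 3 → Fin 2) ≠ 1 := by decide
  funext x
  simp only [ghz3, forall_apply_eq_apply_iff, Pi.add_apply, Pi.single_apply]
  by_cases hx0 : x = 0
  · simp [hx0, h01]
  · by_cases hx1 : x = 1 <;> simp [hx0, hx1, h01.symm]

/-- for any three-qubit density matrix `ρ`, the GHZ fidelity is bounded by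
`(1 + 3·z₂)/4`, where `z₂` is the average of the two-body Pauli-Z correlations
`⟨Z_A Z_B⟩, ⟨Z_A Z_C⟩, ⟨Z_B Z_C⟩` computed from the diagonal of `ρ`. -/
theorem ghz3_fidelity_le_z2_bound
    (ρ : Matrix (Fin 3 → Fin 2) (Fin 3 → Fin 2) ℂ)
    (hρ : ρ.PosSemidef) (htr : ρ.trace = 1) :
    (star ghz3 ⬝ᵥ ρ *ᵥ ghz3).re ≤
      (1 + 3 * ((((∑ x : Fin 3 → Fin 2, (-1 : ℝ) ^ ((x 0 : ℕ) + (x 1 : ℕ)) * (ρ x x).re) +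
        (∑ x : Fin 3 → Fin 2, (-1 : ℝ) ^ ((x 0 : ℕ) + (x 2 : ℕ)) * (ρ x x).re) +
        (∑ x : Fin 3 → Fin 2, (-1 : ℝ) ^ ((x 1 : ℕ) + (x 2 : ℕ)) * (ρ x x).re)) / 3))) / 4 := by
  have htr_re : ∑ x, (ρ x x).re = 1 := by
    simpa [Matrix.trace, Complex.re_sum] using congrArg Complex.re htr
  have hfid := hρ.star_single_add_single_dotProduct_mulVec_le 0 1 ((1 / Real.sqrt 2 : ℝ) : ℂ)
  rw [← ghz3_eq_single_add_single, star_mul_self_ofReal_one_div_sqrt_two] at hfid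
  replace hfid : (star ghz3 ⬝ᵥ ρ *ᵥ ghz3).re ≤ (ρ 0 0).re + (ρ 1 1).re := by
    simpa using (Complex.le_def.mp hfid).1
  have hzz := sum_zz_correlations_add_sum_eq fun x => (ρ x x).re
  linarith
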